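/- Let Λ be the homogeneous quantum complete intersection with primitive a-th root of unity q, σ = Σ αᵢxᵢ. For each generator xₚ, the left-module map Λ/Λσ → Λ/Λσ^{a−1} given by right multiplication by Σ_{i=0}^{a−2} σ^i xₚ σ^{a−2−i} is well defined, i.e., σ · (Σ_{i=0}^{a−2} σ^i xₚ σ^{a−2−i}) ∈ Λσ^{a−1}. -/
import Mathlib

open Finset

section QBinom
variable {k : Type*} [Field k]

/-- Gaussian binomial coefficients via a Pascal-type recursion. -/
def gb (q : k) : ℕ → ℕ → k
  | 0, 0 => 1
  | 0, _ + 1 => 0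
  | _ + 1, 0 => 1
  | m + 1, j + 1 => q ^ (m - j) * gb q m j + gb q m (j + 1)

lemma gb_zero (q : k) (m : ℕ) : gb q m 0 = 1 := by cases m <;> rfl

lemma gb_of_lt (q : k) : ∀ {m j : ℕ}, m < j → gb q m j = 0
  | 0, _ + 1, _ => rfl
  | m + 1, j + 1, h => by
      rw [gb, gb_of_lt q (show m < j by omega), gb_of_lt q (show m < j + 1 by omega),
        mul_zero, add_zero]

lemma gb_self (q : k) : ∀ m, gb q m m = 1
  | 0 => rfl
  | m + 1 => by
      have h0 : gb q m (m + 1) = 0 := gb_of_lt q (by omega)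
      rw [gb, h0, Nat.sub_self, pow_zero, one_mul, gb_self q m, add_zero]

/-- q-factorial -/
def fac (q : k) (m : ℕ) : k := ∏ t ∈ range m, ∑ i ∈ range (t + 1), q ^ i

lemma fac_zero (q : k) : fac q 0 = 1 := by simp [fac]

lemma fac_succ (q : k) (m : ℕ) : fac q (m + 1) = fac q m * ∑ i ∈ range (m + 1), q ^ i :=
  prod_range_succ _ _

lemma sum_range_split (f : ℕ → k) (A : ℕ) : ∀ B, ∑ i ∈ range (A + B), f i
    = (∑ i ∈ range A, f i) + ∑ i ∈ range B, f (A + i)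
  | 0 => by simp
  | B + 1 => by
      rw [← Nat.add_assoc, sum_range_succ, sum_range_split f A B, sum_range_succ, add_assoc]

lemma geom_split (q : k) {m j : ℕ} (hj : j ≤ m) :
    q ^ (m - j) * (∑ i ∈ range (j + 1), q ^ i) + ∑ i ∈ range (m - j), q ^ i
      = ∑ i ∈ range (m + 1), q ^ i := by
  have h : m + 1 = (m - j) + (j + 1) := by omega
  rw [h, sum_range_split (fun i => q ^ i) (m - j) (j + 1), mul_sum]
  simp only [← pow_add]
  ring

lemma gb_mul_fac (q : k) : ∀ m j, j ≤ m → gb q m j * (fac q j * fac q (m - j)) = fac q m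
  | m, 0, _ => by simp [gb_zero, fac_zero]
  | 0, j + 1, h => absurd h (by omega)
  | m + 1, j + 1, h => by
      rcases eq_or_lt_of_le h with heq | hlt
      · obtain rfl : j = m := by omega
        rw [gb_self, Nat.sub_self, fac_zero, one_mul, mul_one]
      · have hjm : j ≤ m := by omega
        have hj1m : j + 1 ≤ m := by omega
        have h1 := gb_mul_fac q m j hjm
        have h2 := gb_mul_fac q m (j + 1) hj1m
        have hsub : m + 1 - (j + 1) = (m - (j + 1)) + 1 := by omega
        have hsub2 : m - (j+1) + 1 = m - j := by omega
        rw [gb, hsub, fac_succ q (m - (j+1)), fac_succ q j, fac_succ q m, hsub2]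
        rw [show m - j = m - (j+1) + 1 from hsub2.symm] at h1
        rw [fac_succ q (m - (j+1)), hsub2] at h1
        rw [fac_succ q j] at h2
        have hg := geom_split q hjm
        linear_combination (q ^ (m - j) * (∑ i ∈ range (j + 1), q ^ i)) * h1
          + (∑ i ∈ range (m - j), q ^ i) * h2 + fac q m * hg

lemma gb_eq_zero {a : ℕ} (ha : 2 ≤ a) {q : k} (hq : IsPrimitiveRoot q a) {j : ℕ}
    (h0 : 0 < j) (hj : j < a) : gb q a j = 0 := by
  have hq1 : q ≠ 1 := hq.ne_one (by omega)
  have hfac_ne : ∀ s, s < a → fac q s ≠ 0 := by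
    intro s hs
    refine Finset.prod_ne_zero_iff.mpr fun t ht => ?_
    have ht1 : t + 1 < a := by have := Finset.mem_range.mp ht; omega
    rw [geom_sum_eq hq1]
    exact div_ne_zero (sub_ne_zero.mpr (hq.pow_ne_one_of_pos_of_lt (by omega) ht1))
      (sub_ne_zero.mpr hq1)
  have hfa : fac q a = 0 := by
    have hmem : a - 1 ∈ range a := by simp; omega
    refine Finset.prod_eq_zero hmem ?_
    rw [show a - 1 + 1 = a by omega]
    exact hq.geom_sum_eq_zero (by omega)
  have hkey := gb_mul_fac q a j (le_of_lt hj)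
  rw [hfa] at hkey
  exact (mul_eq_zero.mp hkey).resolve_right
    (mul_ne_zero (hfac_ne j hj) (hfac_ne (a - j) (by omega)))

end QBinom

section QComm
variable {k : Type*} [Field k] {R : Type*} [Ring R] [Algebra k R]

lemma pow_qcomm {q : k} {x y : R} (h : y * x = q • (x * y)) :
    ∀ m, y ^ m * x = q ^ m • (x * y ^ m)
  | 0 => by simp
  | m + 1 => by
      calc y ^ (m + 1) * x = y * (y ^ m * x) := by rw [pow_succ', mul_assoc]
        _ = y * (q ^ m • (x * y ^ m)) := by rw [pow_qcomm h m]
        _ = q ^ m • (y * x * y ^ m) := by rw [mul_smul_comm, mul_assoc]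
        _ = q ^ m • (q • (x * y) * y ^ m) := by rw [h]
        _ = q ^ (m + 1) • (x * y ^ (m + 1)) := by
              rw [smul_mul_assoc, smul_smul, mul_assoc, ← pow_succ', ← pow_succ]

lemma qadd_pow {q : k} {x y : R} (h : y * x = q • (x * y)) (m : ℕ) :
    (x + y) ^ m = ∑ j ∈ Finset.range (m + 1), gb q m j • (x ^ j * y ^ (m - j)) := by
  induction m with
  | zero => simp [gb]
  | succ m ih =>
    rw [pow_succ, ih, Finset.sum_mul]
    have hterm : ∀ j ∈ Finset.range (m + 1), (gb q m j • (x ^ j * y ^ (m - j))) * (x + y)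
        = (q ^ (m - j) * gb q m j) • (x ^ (j + 1) * y ^ (m - j))
          + gb q m j • (x ^ j * y ^ (m + 1 - j)) := by
      intro j hj
      have hj' : j ≤ m := by simpa [Nat.lt_succ_iff] using hj
      rw [mul_add]
      congr 1
      · rw [smul_mul_assoc, mul_assoc, pow_qcomm h (m - j), mul_smul_comm, smul_smul,
          ← mul_assoc, ← pow_succ, mul_comm (gb q m j)]
      · rw [smul_mul_assoc, mul_assoc, ← pow_succ, show m - j + 1 = m + 1 - j by omega]
    rw [Finset.sum_congr rfl hterm, Finset.sum_add_distrib]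
    rw [Finset.sum_range_succ' (fun j => gb q (m + 1) j • (x ^ j * y ^ (m + 1 - j))) (m + 1),
      Finset.sum_range_succ' (fun j => gb q m j • (x ^ j * y ^ (m + 1 - j))) m]
    have expand : ∀ i ∈ Finset.range (m + 1), gb q (m + 1) (i + 1) • (x ^ (i + 1) * y ^ (m + 1 - (i + 1)))
        = (q ^ (m - i) * gb q m i) • (x ^ (i + 1) * y ^ (m - i))
          + gb q m (i + 1) • (x ^ (i + 1) * y ^ (m + 1 - (i + 1))) := by
      intro i hi
      have hmi : m + 1 - (i + 1) = m - i := by omega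
      rw [hmi]
      show (q ^ (m - i) * gb q m i + gb q m (i + 1)) • (x ^ (i + 1) * y ^ (m - i)) = _
      rw [add_smul]
    rw [Finset.sum_congr rfl expand, Finset.sum_add_distrib,
      Finset.sum_range_succ (fun i => gb q m (i + 1) • (x ^ (i + 1) * y ^ (m + 1 - (i + 1)))) m]
    have hz : gb q m (m + 1) • (x ^ (m + 1) * y ^ (m + 1 - (m + 1))) = 0 := by
      rw [gb_of_lt q (by omega), zero_smul]
    rw [hz, add_zero]
    simp only [gb_zero, Nat.sub_zero, one_smul, pow_zero, one_mul]
    abel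

lemma qadd_pow_eq_zero {a : ℕ} (ha : 2 ≤ a) {q : k} (hq : IsPrimitiveRoot q a) {x y : R}
    (h : y * x = q • (x * y)) (hx : x ^ a = 0) (hy : y ^ a = 0) : (x + y) ^ a = 0 := by
  rw [qadd_pow h a]
  refine Finset.sum_eq_zero fun j hj => ?_
  rcases Nat.eq_zero_or_pos j with rfl | hj0
  · simp [hy]
  rcases eq_or_lt_of_le (Nat.lt_succ_iff.mp (Finset.mem_range.mp hj)) with rfl | hja
  · simp [hx]
  · rw [gb_eq_zero ha hq hj0 hja, zero_smul]

lemma sum_pow_eq_zero {a : ℕ} (ha : 2 ≤ a) {q : k} (hq : IsPrimitiveRoot q a) :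
    ∀ {m : ℕ} (z : Fin m → R), (∀ u, z u ^ a = 0) →
      (∀ i j : Fin m, i < j → z i * z j = q • (z j * z i)) → (∑ u, z u) ^ a = 0 := by
  intro m
  induction m with
  | zero => intro z _ _; simp; exact zero_pow (by omega)
  | succ m ih =>
    intro z hz hcomm
    rw [Fin.sum_univ_castSucc]
    have hq0 : q ≠ 0 := hq.ne_zero (by omega)
    set x : R := ∑ u : Fin m, z u.castSucc with hxdef
    set y : R := z (Fin.last m) with hydef
    have hxy : x * y = q • (y * x) := by
      rw [hxdef, Finset.sum_mul, Finset.mul_sum, Finset.smul_sum]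
      refine Finset.sum_congr rfl fun u _ => ?_
      exact hcomm u.castSucc (Fin.last m) (Fin.castSucc_lt_last u)
    have hyx : y * x = q⁻¹ • (x * y) := by
      rw [hxy, smul_smul, inv_mul_cancel₀ hq0, one_smul]
    refine qadd_pow_eq_zero ha hq.inv hyx ?_ (hz _)
    exact ih (fun u => z u.castSucc) (fun u => hz _)
      (fun i j hij => hcomm i.castSucc j.castSucc (by simpa using hij))

end QComm

section DN
open TrivSqZeroExt

lemma dn_pow {R : Type*} [Ring R] (s t : R) : ∀ m, (inl s + inr t : DualNumber R) ^ m
    = inl (s ^ m) + inr (∑ j ∈ Finset.range m, s ^ j * t * s ^ (m - 1 - j))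
  | 0 => by simp
  | m + 1 => by
      rw [pow_succ, dn_pow s t m, add_mul, mul_add, mul_add, inl_mul_inl, inl_mul_inr,
        inr_mul_inl, inr_mul_inr, add_zero, ← pow_succ]
      have h1 : MulOpposite.op s • (∑ j ∈ Finset.range m, s ^ j * t * s ^ (m - 1 - j))
          = ∑ j ∈ Finset.range m, s ^ j * t * s ^ (m - j) := by
        rw [op_smul_eq_mul, Finset.sum_mul]
        refine Finset.sum_congr rfl fun j hj => ?_
        rw [mul_assoc, ← pow_succ, show m - 1 - j + 1 = m - j by
          have := Finset.mem_range.mp hj; omega]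
      rw [h1, smul_eq_mul]
      have h2 : ∑ j ∈ Finset.range (m + 1), s ^ j * t * s ^ (m + 1 - 1 - j)
          = (∑ j ∈ Finset.range m, s ^ j * t * s ^ (m - j)) + s ^ m * t := by
        simp only [Nat.add_sub_cancel]
        rw [Finset.sum_range_succ, Nat.sub_self, pow_zero, mul_one]
      rw [h2, inr_add, add_assoc, add_comm (inr (s ^ m * t))]

variable {k : Type*} [Field k] {R : Type*} [Ring R] [Algebra k R]

/-- Auxiliary central coefficient in the dual numbers. -/
def betaAux (R : Type*) [Ring R] [Algebra k R] {n : ℕ} (α : Fin n → k) (p u : Fin n) : DualNumber R :=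
  algebraMap k (DualNumber R) (α u) + (if u = p then DualNumber.eps else 0)

lemma betaAux_comm {n : ℕ} (α : Fin n → k) (p u : Fin n) (d : DualNumber R) :
    betaAux R α p u * d = d * betaAux R α p u := by
  rw [betaAux, add_mul, mul_add, Algebra.commutes]
  congr 1
  split
  · exact (DualNumber.commute_eps_left d).eq
  · simp

lemma dn_key {a : ℕ} (ha : 2 ≤ a) {q : k} (hq : IsPrimitiveRoot q a) {n : ℕ}
    (X : Fin n → R) (α : Fin n → k) (p : Fin n)
    (hXpow : ∀ u, X u ^ a = 0)
    (hXcomm : ∀ i j : Fin n, i < j → X i * X j = q • (X j * X i)) :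
    ∑ j ∈ Finset.range a, (∑ u, α u • X u) ^ j * X p * (∑ u, α u • X u) ^ (a - 1 - j) = 0 := by
  have hmain : (∑ u, betaAux R α p u * inl (X u)) ^ a = 0 := by
    refine sum_pow_eq_zero ha hq _ (fun u => ?_) (fun i j hij => ?_)
    · have hc : Commute (betaAux R α p u) (inl (X u) : DualNumber R) :=
        betaAux_comm α p u _
      rw [hc.mul_pow, inl_pow, hXpow u, inl_zero, mul_zero]
    · rw [mul_assoc, ← mul_assoc (inl (X i)), ← betaAux_comm α p j (inl (X i)),
        mul_assoc (betaAux R α p j), inl_mul_inl, hXcomm i j hij, inl_smul,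
        mul_smul_comm, mul_smul_comm, ← inl_mul_inl,
        ← mul_assoc, betaAux_comm α p i (betaAux R α p j), mul_assoc,
        ← mul_assoc (betaAux R α p i), betaAux_comm α p i (inl (X j)),
        mul_assoc (inl (X j)), ← mul_assoc (betaAux R α p j)]
  have hterm : ∀ u, betaAux R α p u * (inl (X u) : DualNumber R)
      = inl (α u • X u) + (if u = p then inr (X u) else 0) := by
    intro u
    rw [betaAux, add_mul, ← Algebra.smul_def, ← inl_smul]
    congr 1
    split
    · show (DualNumber.eps : DualNumber R) * inl (X u) = inr (X u)
      show (inr 1 : DualNumber R) * inl (X u) = inr (X u)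
      rw [inr_mul_inl, op_smul_eq_mul, one_mul]
    · rw [zero_mul]
  have hsum : (∑ u, betaAux R α p u * inl (X u))
      = inl (∑ u, α u • X u) + (inr (X p) : DualNumber R) := by
    rw [Finset.sum_congr rfl (fun u _ => hterm u), Finset.sum_add_distrib]
    congr 1
    · exact (map_sum (TrivSqZeroExt.inlHom R R) (fun u => α u • X u) Finset.univ).symm
    · simp
  rw [hsum, dn_pow] at hmain
  have hsnd := congrArg TrivSqZeroExt.snd hmain
  simpa using hsnd

end DN

/-- The defining relations of a quantum complete intersection:
`Xᵤ^{aᵤ} = 0` and `XᵢXⱼ = q_{ij}·XⱼXᵢ` for `i < j`. -/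
inductive QCIRel (k : Type*) [Field k] (n : ℕ) (a : Fin n → ℕ) (q : Fin n → Fin n → k) :
    FreeAlgebra k (Fin n) → FreeAlgebra k (Fin n) → Prop
  | pow (u : Fin n) : QCIRel k n a q (FreeAlgebra.ι k u ^ a u) 0
  | comm (i j : Fin n) (hij : i < j) : QCIRel k n a q
      (FreeAlgebra.ι k i * FreeAlgebra.ι k j)
      (q i j • (FreeAlgebra.ι k j * FreeAlgebra.ι k i))

/-- The quantum complete intersection `k⟨X₁,…,Xₙ⟩/(Xᵤ^{aᵤ}, XᵢXⱼ − q_{ij}XⱼXᵢ)`. -/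
abbrev QCI (k : Type*) [Field k] (n : ℕ) (a : Fin n → ℕ) (q : Fin n → Fin n → k) :=
  RingQuot (QCIRel k n a q)

/-- The image `xᵢ` of the generator `Xᵢ` in the quantum complete intersection. -/
def QCI.x (k : Type*) [Field k] (n : ℕ) (a : Fin n → ℕ) (q : Fin n → Fin n → k) (i : Fin n) :
    QCI k n a q :=
  RingQuot.mkAlgHom k (QCIRel k n a q) (FreeAlgebra.ι k i)

lemma QCI.x_pow (k : Type*) [Field k] (n : ℕ) (a : Fin n → ℕ) (q : Fin n → Fin n → k)
    (u : Fin n) : QCI.x k n a q u ^ a u = 0 := by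
  have h := RingQuot.mkAlgHom_rel k (QCIRel.pow (k := k) (n := n) (a := a) (q := q) u)
  simpa [QCI.x, map_pow] using h

lemma QCI.x_comm (k : Type*) [Field k] (n : ℕ) (a : Fin n → ℕ) (q : Fin n → Fin n → k)
    (i j : Fin n) (hij : i < j) :
    QCI.x k n a q i * QCI.x k n a q j = q i j • (QCI.x k n a q j * QCI.x k n a q i) := by
  have h := RingQuot.mkAlgHom_rel k (QCIRel.comm (k := k) (n := n) (a := a) (q := q) i j hij)
  simpa [QCI.x, map_mul, map_smul] using h

/-- In the homogeneous quantum complete intersection `Λ` with primitive `a`-th root of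
unity `q`, for `σ = Σ αᵢxᵢ` and each generator `xₚ`, the left-module map
`Λ/Λσ → Λ/Λσ^{a−1}` given by right multiplication by `Σ_{i=0}^{a−2} σⁱ xₚ σ^{a−2−i}` is
well defined: `σ · (Σ_{i=0}^{a−2} σⁱ xₚ σ^{a−2−i}) ∈ Λσ^{a−1}`. -/
theorem QCI_right_mult_well_defined (k : Type) [Field k] (n a : ℕ) (ha : 2 ≤ a) (q : k)
    (hq : IsPrimitiveRoot q a) (α : Fin n → k) (p : Fin n)
    (σ : QCI k n (fun _ => a) (fun _ _ => q))
    (hσ : σ = ∑ u, α u • QCI.x k n (fun _ => a) (fun _ _ => q) u) :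
    σ * (∑ i ∈ Finset.range (a - 1),
        σ ^ i * QCI.x k n (fun _ => a) (fun _ _ => q) p * σ ^ (a - 2 - i)) ∈
      Submodule.span (QCI k n (fun _ => a) (fun _ _ => q)) {σ ^ (a - 1)} := by
  set X : Fin n → QCI k n (fun _ => a) (fun _ _ => q) :=
    QCI.x k n (fun _ => a) (fun _ _ => q) with hX
  have hT : ∑ j ∈ Finset.range a, σ ^ j * X p * σ ^ (a - 1 - j) = 0 := by
    rw [hσ]
    exact dn_key ha hq X α p (fun u => QCI.x_pow k n _ _ u)
      (fun i j hij => QCI.x_comm k n _ _ i j hij)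
  have hmul : σ * (∑ i ∈ Finset.range (a - 1), σ ^ i * X p * σ ^ (a - 2 - i))
      = ∑ i ∈ Finset.range (a - 1), σ ^ (i + 1) * X p * σ ^ (a - 1 - (i + 1)) := by
    rw [Finset.mul_sum]
    refine Finset.sum_congr rfl fun i _ => ?_
    rw [show a - 1 - (i + 1) = a - 2 - i by omega, ← mul_assoc, ← mul_assoc, ← pow_succ']
  have hsplit : ∑ j ∈ Finset.range a, σ ^ j * X p * σ ^ (a - 1 - j)
      = (∑ i ∈ Finset.range (a - 1), σ ^ (i + 1) * X p * σ ^ (a - 1 - (i + 1)))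
        + X p * σ ^ (a - 1) := by
    have h1 : a = (a - 1) + 1 := by omega
    calc ∑ j ∈ Finset.range a, σ ^ j * X p * σ ^ (a - 1 - j)
        = ∑ j ∈ Finset.range ((a - 1) + 1), σ ^ j * X p * σ ^ (a - 1 - j) := by rw [← h1]
      _ = (∑ i ∈ Finset.range (a - 1), σ ^ (i + 1) * X p * σ ^ (a - 1 - (i + 1)))
            + σ ^ 0 * X p * σ ^ (a - 1 - 0) :=
          Finset.sum_range_succ' (fun j => σ ^ j * X p * σ ^ (a - 1 - j)) (a - 1)
      _ = (∑ i ∈ Finset.range (a - 1), σ ^ (i + 1) * X p * σ ^ (a - 1 - (i + 1)))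
            + X p * σ ^ (a - 1) := by rw [pow_zero, one_mul, Nat.sub_zero]
  rw [hsplit, add_eq_zero_iff_eq_neg] at hT
  have hfin : σ * (∑ i ∈ Finset.range (a - 1), σ ^ i * X p * σ ^ (a - 2 - i))
      = (-(X p)) • σ ^ (a - 1) := by
    rw [hmul, hT, smul_eq_mul]
    exact (neg_mul (X p) (σ ^ (a - 1))).symm
  rw [hfin]
  exact Submodule.smul_mem _ _ (Submodule.mem_span_singleton_self _)
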